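/- Vovk's aggregating algorithm guarantee: under realizability by an expert e*, i.e. each outcome o_h is drawn from p^{(e*)}(c_h) conditionally on the context c_h and the past, the predictions q̂_h = E_{e∼q̃_h}[p^{(e)}(c_h)] with exponential weights q̃_h^{(e)} ∝ exp(−Σ_{υ<h} log(1/p^{(e)}(c_υ)(o_υ))) satisfy (1/H) Σ_{h=1}^H E[D_TV(q̂_h, p^{(e*)}(c_h))] ≤ sqrt(log|E|/H). -/

import Mathlib

/-!
Let `W_k = ∑_e ∏_{j<k} p^{(e)}(c_j)(o_j)` be the total exponential weight, so that
`q̂_h(o_h) = W_{h+1} / W_h`. The log-loss regret against `e*` then telescopes: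
`∑_h log (p^{(e*)}(c_h)(o_h) / q̂_h(o_h)) = log (P(o) W_0 / W_H) ≤ log |E|`, where `P(o)` is the
probability of the outcome sequence under `e*`, because `W_0 = |E|` and `W_H ≥ P(o)`.
By the tower property the expectation of the `h`-th summand is the expected divergence
`KL(p^{(e*)}(c_h) ‖ q̂_h)`, so the expected cumulative KL divergence is at most `log |E|`.
Finally `D_TV² ≤ ∑ (√p - √q)² ≤ KL` (Cauchy–Schwarz, then `log x ≤ x - 1`), and Cauchy–Schwarz
over the `H` rounds gives `E ∑_h D_TV ≤ √(H log |E|)`.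
-/

open Finset

namespace VovkAggregation

section Divergences

variable {ι : Type*} [Fintype ι]

noncomputable def tvDist (P Q : ι → ℝ) : ℝ := (1 / 2 : ℝ) * ∑ i, |P i - Q i|

noncomputable def klDiv (P Q : ι → ℝ) : ℝ := ∑ i, P i * Real.log (P i / Q i)

lemma two_mul_sub_sqrt_mul_le_mul_log {x y : ℝ} (hx : 0 < x) (hy : 0 < y) :
    2 * (x - √(x * y)) ≤ x * Real.log (x / y) := by
  set t := √(y / x)
  have ht : 0 < t := Real.sqrt_pos.2 (div_pos hy hx)
  have hsqrt : √(x * y) = x * t := by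
    rw [← Real.sqrt_sq hx.le, ← Real.sqrt_mul (sq_nonneg x), Real.sqrt_sq hx.le]
    congr 1; field_simp
  have hlog : Real.log (x / y) = -2 * Real.log t := by
    rw [← inv_div, Real.log_inv, ← Real.sq_sqrt (div_pos hy hx).le, Real.log_pow]
    push_cast; ring
  rw [hsqrt, hlog]
  nlinarith [Real.log_le_sub_one_of_pos ht]

lemma sum_sq_sqrt_sub_le_klDiv {P Q : ι → ℝ} (hP : ∀ i, 0 ≤ P i) (hQ : ∀ i, 0 ≤ Q i)
    (hPQ : ∑ i, P i = ∑ i, Q i) (hac : ∀ i, 0 < P i → 0 < Q i) :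
    ∑ i, (√(P i) - √(Q i)) ^ 2 ≤ klDiv P Q := by
  have hexpand : ∀ i, (√(P i) - √(Q i)) ^ 2 = P i + Q i - 2 * √(P i * Q i) := fun i => by
    rw [sub_sq, Real.sq_sqrt (hP i), Real.sq_sqrt (hQ i), Real.sqrt_mul (hP i)]; ring
  calc ∑ i, (√(P i) - √(Q i)) ^ 2 = ∑ i, 2 * (P i - √(P i * Q i)) := by
        simp only [hexpand, sum_sub_distrib, sum_add_distrib, ← mul_sum, hPQ]; ring
    _ ≤ klDiv P Q := sum_le_sum fun i _ => by
        rcases (hP i).eq_or_lt with hPi | hPi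
        · simp [← hPi]
        · exact two_mul_sub_sqrt_mul_le_mul_log hPi (hac i hPi)

lemma sq_sum_abs_sub_le {P Q : ι → ℝ} (hP : ∀ i, 0 ≤ P i) (hQ : ∀ i, 0 ≤ Q i) :
    (∑ i, |P i - Q i|) ^ 2
      ≤ (∑ i, (√(P i) - √(Q i)) ^ 2) * (2 * ∑ i, (P i + Q i)) := by
  rw [mul_sum]
  refine sum_sq_le_sum_mul_sum_of_sq_le_mul _ (fun i _ => sq_nonneg _)
    (fun i _ => mul_nonneg zero_le_two (add_nonneg (hP i) (hQ i))) fun i _ => ?_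
  have hfactor : P i - Q i = (√(P i) - √(Q i)) * (√(P i) + √(Q i)) := by
    linear_combination Real.sq_sqrt (hQ i) - Real.sq_sqrt (hP i)
  rw [sq_abs, hfactor, mul_pow]
  gcongr
  nlinarith [sq_nonneg (√(P i) - √(Q i)), Real.sq_sqrt (hP i), Real.sq_sqrt (hQ i)]

theorem tvDist_sq_le_klDiv {P Q : ι → ℝ} (hP : ∀ i, 0 ≤ P i) (hQ : ∀ i, 0 ≤ Q i)
    (hP1 : ∑ i, P i = 1) (hQ1 : ∑ i, Q i = 1) (hac : ∀ i, 0 < P i → 0 < Q i) :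
    tvDist Q P ^ 2 ≤ klDiv P Q := by
  have hTV := sq_sum_abs_sub_le hP hQ
  rw [sum_add_distrib, hP1, hQ1] at hTV
  calc tvDist Q P ^ 2 = (∑ i, |P i - Q i|) ^ 2 / 4 := by
        simp only [tvDist, abs_sub_comm (Q _)]; ring
    _ ≤ ∑ i, (√(P i) - √(Q i)) ^ 2 := by linarith
    _ ≤ klDiv P Q := sum_sq_sqrt_sub_le_klDiv hP hQ (hP1.trans hQ1.symm) hac

end Divergences

lemma sum_sum_update_eq_card_smul {ι O M : Type*} [DecidableEq ι] [Fintype ι] [Fintype O]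
    [AddCommMonoid M] (φ : (ι → O) → M) (i : ι) :
    ∑ o : ι → O, ∑ v, φ (Function.update o i v) = Fintype.card O • ∑ o, φ o := by
  have hinv : Function.Involutive fun x : (ι → O) × O => (Function.update x.1 i x.2, x.1 i) :=
    fun x => by simp
  rw [← Fintype.sum_prod_type', Fintype.sum_bijective _ hinv.bijective _ (fun x => φ x.1)
    fun _ => rfl, Fintype.sum_prod_type]
  simp only [sum_const, card_univ, smul_sum]

section SequentialKernel

variable {H : ℕ} {O : Type*}

def DependsOnFirst {β : Type*} (k : ℕ) (g : (Fin H → O) → β) : Prop :=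
  ∀ o o', (∀ j : Fin H, (j : ℕ) < k → o j = o' j) → g o = g o'

lemma DependsOnFirst.update_eq {β : Type*} {k : ℕ} {g : (Fin H → O) → β}
    (hg : DependsOnFirst k g) (o : Fin H → O) {i : Fin H} (hi : k ≤ i) (w : O) :
    g (Function.update o i w) = g o :=
  hg _ _ fun j hj => Function.update_of_ne (by rintro rfl; omega) _ _

lemma DependsOnFirst.mono {β : Type*} {k l : ℕ} {g : (Fin H → O) → β}
    (hg : DependsOnFirst k g) (hkl : k ≤ l) : DependsOnFirst l g :=
  fun o o' hoo => hg o o' fun j hj => hoo j (by omega)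

def prefixProb (q : (Fin H → O) → Fin H → O → ℝ) (k : ℕ) (o : Fin H → O) : ℝ :=
  ∏ j ∈ univ.filter (fun j : Fin H => (j : ℕ) < k), q o j (o j)

variable (q : (Fin H → O) → Fin H → O → ℝ)

lemma prefixProb_zero (o : Fin H → O) : prefixProb q 0 o = 1 := by
  simp [prefixProb]

lemma prefixProb_self (o : Fin H → O) : prefixProb q H o = ∏ j, q o j (o j) := by
  simp [prefixProb]

lemma prefixProb_succ (i : Fin H) (o : Fin H → O) :
    prefixProb q (i + 1) o = prefixProb q i o * q o i (o i) := by
  have hfilter : univ.filter (fun j : Fin H => (j : ℕ) < i + 1)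
      = insert i (univ.filter fun j : Fin H => (j : ℕ) < i) := by
    ext j
    simp only [mem_filter, mem_univ, true_and, mem_insert, Fin.ext_iff]
    omega
  rw [prefixProb, hfilter, prod_insert (by simp), mul_comm, prefixProb]

lemma prefixProb_nonneg (hq : ∀ o j v, 0 ≤ q o j v) (k : ℕ) (o : Fin H → O) :
    0 ≤ prefixProb q k o :=
  prod_nonneg fun _ _ => hq _ _ _

lemma prefixProb_pos (hq : ∀ o j v, 0 ≤ q o j v) {o : Fin H → O}
    (ho : 0 < prefixProb q H o) (k : ℕ) : 0 < prefixProb q k o := by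
  rw [prefixProb_self] at ho
  have hfac := prod_ne_zero_iff.1 ho.ne'
  exact prod_pos fun j _ => (hq _ _ _).lt_of_ne' (hfac j (mem_univ j))

lemma dependsOnFirst_prefixProb (hq : ∀ j : Fin H, DependsOnFirst j fun o => q o j) (k : ℕ) :
    DependsOnFirst k (prefixProb q k) := fun o o' hoo => by
  refine prod_congr rfl fun j hj => ?_
  have hjk : (j : ℕ) < k := (mem_filter.1 hj).2
  rw [← hoo j hjk]
  exact congrFun (hq j o o' fun i hi => hoo i (hi.trans hjk)) (o j)

variable [Fintype O] (hq : ∀ j : Fin H, DependsOnFirst j fun o => q o j)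
  (hq1 : ∀ o j, ∑ v, q o j v = 1)
include hq

lemma card_mul_sum_prefixProb_succ (i : Fin H) {ψ : (Fin H → O) → O → ℝ}
    (hψ : DependsOnFirst i ψ) :
    Fintype.card O * ∑ o, prefixProb q (i + 1) o * ψ o (o i)
      = ∑ o, prefixProb q i o * ∑ v, q o i v * ψ o v := by
  rw [← nsmul_eq_mul, ← sum_sum_update_eq_card_smul _ i]
  refine sum_congr rfl fun o _ => ?_
  rw [mul_sum]
  refine sum_congr rfl fun v _ => ?_
  rw [prefixProb_succ, (dependsOnFirst_prefixProb q hq i).update_eq o le_rfl,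
    (hq i).update_eq o le_rfl, hψ.update_eq o le_rfl, Function.update_self]
  ring

include hq1

-- The sums run over all of `Fin H → O`, so each of the coordinates `k, …, H - 1`, which neither
-- `g` nor `prefixProb q k` sees, is counted `card O` times.
lemma card_pow_mul_sum_prefixProb {k : ℕ} (hk : k ≤ H) {g : (Fin H → O) → ℝ}
    (hg : DependsOnFirst k g) :
    Fintype.card O ^ (H - k) * ∑ o, prefixProb q H o * g o = ∑ o, prefixProb q k o * g o := by
  induction hk using Nat.decreasingInduction with
  | self => simp
  | of_succ k hkH ih =>
    have hstep := card_mul_sum_prefixProb_succ q hq ⟨k, hkH⟩ (ψ := fun o _ => g o) fun o o' hoo =>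
      funext fun _ => hg o o' hoo
    calc (Fintype.card O : ℝ) ^ (H - k) * ∑ o, prefixProb q H o * g o
        = Fintype.card O * (Fintype.card O ^ (H - (k + 1)) * ∑ o, prefixProb q H o * g o) := by
          rw [← mul_assoc, ← pow_succ', Nat.sub_add_eq, Nat.sub_add_cancel (by omega)]
      _ = ∑ o, prefixProb q k o * g o := by
          rw [ih (hg.mono k.le_succ), hstep]
          simp [← sum_mul, hq1]

lemma sum_prefixProb_eq_one [Nonempty O] : ∑ o, prefixProb q H o = 1 := by
  have h := card_pow_mul_sum_prefixProb q hq hq1 H.zero_le (g := fun _ => 1) fun _ _ _ => rfl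
  simp only [mul_one, prefixProb_zero, sum_const, card_univ, Fintype.card_fun, Fintype.card_fin,
    Nat.sub_zero, nsmul_eq_mul, Nat.cast_pow] at h
  exact (mul_eq_left₀ (pow_ne_zero _ (Nat.cast_ne_zero.2 Fintype.card_ne_zero))).1 h

theorem sum_prefixProb_mul_sum_kernel [Nonempty O] (h : Fin H) {ψ : (Fin H → O) → O → ℝ}
    (hψ : DependsOnFirst h ψ) :
    ∑ o, prefixProb q H o * ∑ v, q o h v * ψ o v = ∑ o, prefixProb q H o * ψ o (o h) := by
  have hexpect : DependsOnFirst h fun o => ∑ v, q o h v * ψ o v := fun o o' hoo => by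
    dsimp only
    rw [show q o h = q o' h from hq h o o' hoo, hψ o o' hoo]
  have hsample : DependsOnFirst (h + 1) fun o => ψ o (o h) := fun o o' hoo => by
    dsimp only
    rw [hψ o o' fun j hj => hoo j (by omega), hoo h (by omega)]
  apply mul_left_cancel₀ (pow_ne_zero (H - h) (Nat.cast_ne_zero.2 (Fintype.card_ne_zero (α := O))))
  rw [card_pow_mul_sum_prefixProb q hq hq1 h.isLt.le hexpect,
    ← card_mul_sum_prefixProb_succ q hq h hψ,
    ← card_pow_mul_sum_prefixProb q hq hq1 h.isLt hsample,
    show H - h = H - (h + 1) + 1 by omega, pow_succ]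
  ring

end SequentialKernel

lemma sq_sum_mul_sum_le_card_mul {α β : Type*} [Fintype α] [Fintype β] {P : α → ℝ}
    (hP : ∀ a, 0 ≤ P a) (hP1 : ∑ a, P a = 1) (X : α → β → ℝ) :
    (∑ a, P a * ∑ b, X a b) ^ 2 ≤ Fintype.card β * ∑ a, P a * ∑ b, X a b ^ 2 := by
  have hcs := sum_sq_le_sum_mul_sum_of_sq_le_mul (univ : Finset (α × β))
    (r := fun x => P x.1 * X x.1 x.2) (f := fun x => P x.1) (g := fun x => P x.1 * X x.1 x.2 ^ 2)
    (fun x _ => hP x.1) (fun x _ => mul_nonneg (hP x.1) (sq_nonneg _)) fun x _ => le_of_eq (by ring)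
  simp only [Fintype.sum_prod_type, sum_const, card_univ,
    nsmul_eq_mul, ← mul_sum, hP1, mul_one] at hcs
  simpa only [mul_sum] using hcs

section Aggregation

variable {H : ℕ} {C O E : Type*} (p : E → C → O → ℝ) (ctx : (Fin H → O) → Fin H → C)

/-- `exp (-∑_{j < k} log (1 / p e (c_j) (o_j)))`: the unnormalised exponential weight of `e`. -/
noncomputable def weight (e : E) (k : ℕ) (o : Fin H → O) : ℝ :=
  prefixProb (fun o j => p e (ctx o j)) k o

variable {p}

lemma weight_nonneg (hpnn : ∀ e c o, 0 ≤ p e c o) (e : E) (k : ℕ) (o : Fin H → O) :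
    0 ≤ weight p ctx e k o :=
  prefixProb_nonneg _ (fun _ _ _ => hpnn _ _ _) k o

lemma dependsOnFirst_expert (hctx : ∀ h : Fin H, DependsOnFirst h fun o => ctx o h) (e : E)
    (j : Fin H) : DependsOnFirst j fun o => p e (ctx o j) := fun o o' hoo =>
  congrArg (p e) (hctx j o o' hoo)

lemma dependsOnFirst_weight (hctx : ∀ h : Fin H, DependsOnFirst h fun o => ctx o h) (e : E)
    (k : ℕ) : DependsOnFirst k (weight p ctx e k) :=
  dependsOnFirst_prefixProb _ (dependsOnFirst_expert ctx hctx e) k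

lemma weight_pos (hpnn : ∀ e c o, 0 ≤ p e c o) {e : E} {o : Fin H → O}
    (ho : 0 < weight p ctx e H o) (k : ℕ) : 0 < weight p ctx e k o :=
  prefixProb_pos _ (fun _ _ _ => hpnn _ _ _) ho k

lemma sum_weight_eq_one [Fintype O] [Nonempty O] (hpsum : ∀ e c, ∑ v, p e c v = 1)
    (hctx : ∀ h : Fin H, DependsOnFirst h fun o => ctx o h) (e : E) :
    ∑ o, weight p ctx e H o = 1 :=
  sum_prefixProb_eq_one _ (dependsOnFirst_expert ctx hctx e) fun _ _ => hpsum _ _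

variable [Fintype E]

variable (p) in
noncomputable def totalWeight (k : ℕ) (o : Fin H → O) : ℝ := ∑ e, weight p ctx e k o

variable (p) in
noncomputable def mixture (h : Fin H) (o : Fin H → O) (v : O) : ℝ :=
  (∑ e, weight p ctx e h o * p e (ctx o h) v) / totalWeight p ctx h o

lemma totalWeight_zero (o : Fin H → O) : totalWeight p ctx 0 o = Fintype.card E := by
  simp [totalWeight, weight, prefixProb_zero]

lemma mixture_apply_self (h : Fin H) (o : Fin H → O) :
    mixture p ctx h o (o h) = totalWeight p ctx (h + 1) o / totalWeight p ctx h o := by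
  simp only [mixture, totalWeight, weight, prefixProb_succ]

lemma weight_le_totalWeight (hpnn : ∀ e c o, 0 ≤ p e c o) (e : E) (k : ℕ) (o : Fin H → O) :
    weight p ctx e k o ≤ totalWeight p ctx k o :=
  single_le_sum (fun e _ => weight_nonneg ctx hpnn e k o) (mem_univ e)

lemma mixture_nonneg (hpnn : ∀ e c o, 0 ≤ p e c o) (h : Fin H) (o : Fin H → O) (v : O) :
    0 ≤ mixture p ctx h o v :=
  div_nonneg (sum_nonneg fun e _ => mul_nonneg (weight_nonneg ctx hpnn e h o) (hpnn _ _ _))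
    (sum_nonneg fun e _ => weight_nonneg ctx hpnn e h o)

lemma mixture_pos (hpnn : ∀ e c o, 0 ≤ p e c o) {estar : E} {h : Fin H} {o : Fin H → O}
    (ho : 0 < weight p ctx estar h o) {v : O} (hv : 0 < p estar (ctx o h) v) :
    0 < mixture p ctx h o v := by
  have hnum := single_le_sum (f := fun e => weight p ctx e h o * p e (ctx o h) v)
    (fun e _ => mul_nonneg (weight_nonneg ctx hpnn e h o) (hpnn _ _ _)) (mem_univ estar)
  exact div_pos ((mul_pos ho hv).trans_le hnum)
    (ho.trans_le (weight_le_totalWeight ctx hpnn estar h o))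

lemma dependsOnFirst_mixture (hctx : ∀ h : Fin H, DependsOnFirst h fun o => ctx o h)
    (h : Fin H) : DependsOnFirst h (mixture p ctx h) := fun o o' hoo => by
  have hweight (e : E) := dependsOnFirst_weight (p := p) ctx hctx e h o o' hoo
  funext v
  simp only [mixture, totalWeight, hweight, show ctx o h = ctx o' h from hctx h o o' hoo]

lemma sum_mixture [Fintype O] (hpsum : ∀ e c, ∑ v, p e c v = 1) (h : Fin H) (o : Fin H → O)
    (hW : totalWeight p ctx h o ≠ 0) : ∑ v, mixture p ctx h o v = 1 := by
  unfold mixture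
  rw [← sum_div, sum_comm, div_eq_one_iff_eq hW]
  simp only [← mul_sum, hpsum, mul_one]
  rfl

lemma sum_log_div_mixture_le_log_card (hpnn : ∀ e c o, 0 ≤ p e c o) {estar : E}
    {o : Fin H → O} (ho : 0 < weight p ctx estar H o) :
    ∑ h : Fin H, Real.log (p estar (ctx o h) (o h) / mixture p ctx h o (o h))
      ≤ Real.log (Fintype.card E) := by
  have hW k : 0 < totalWeight p ctx k o :=
    (weight_pos ctx hpnn ho k).trans_le (weight_le_totalWeight ctx hpnn estar k o)
  have hp (h : Fin H) : 0 < p estar (ctx o h) (o h) := by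
    have hsucc := weight_pos ctx hpnn ho (h + 1)
    rw [weight, prefixProb_succ] at hsucc
    exact pos_of_mul_pos_right hsucc (weight_nonneg ctx hpnn estar h o)
  have hterm (h : Fin H) : Real.log (p estar (ctx o h) (o h) / mixture p ctx h o (o h))
      = Real.log (p estar (ctx o h) (o h))
        + (Real.log (totalWeight p ctx h o) - Real.log (totalWeight p ctx (h + 1) o)) := by
    rw [mixture_apply_self, div_div_eq_mul_div, Real.log_div (mul_pos (hp h) (hW _)).ne' (hW _).ne',
      Real.log_mul (hp h).ne' (hW _).ne']
    ring
  have htelescope : ∑ h : Fin H,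
      (Real.log (totalWeight p ctx h o) - Real.log (totalWeight p ctx (h + 1) o))
      = Real.log (totalWeight p ctx 0 o) - Real.log (totalWeight p ctx H o) := by
    rw [Fin.sum_univ_eq_sum_range (fun k => Real.log (totalWeight p ctx k o)
      - Real.log (totalWeight p ctx (k + 1) o)), sum_range_sub']
  rw [sum_congr rfl fun h _ => hterm h, sum_add_distrib, htelescope, totalWeight_zero,
    ← Real.log_prod fun h _ => (hp h).ne']
  have hle := Real.log_le_log (weight_pos ctx hpnn ho H) (weight_le_totalWeight ctx hpnn estar H o)
  rw [weight, prefixProb_self] at hle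
  linarith

lemma tvDist_mixture_sq_le_klDiv [Fintype O] (hpnn : ∀ e c o, 0 ≤ p e c o)
    (hpsum : ∀ e c, ∑ v, p e c v = 1) {estar : E} {h : Fin H} {o : Fin H → O}
    (ho : 0 < weight p ctx estar h o) :
    tvDist (mixture p ctx h o) (p estar (ctx o h)) ^ 2
      ≤ klDiv (p estar (ctx o h)) (mixture p ctx h o) :=
  tvDist_sq_le_klDiv (hpnn _ _) (mixture_nonneg ctx hpnn h o) (hpsum _ _)
    (sum_mixture ctx hpsum h o (ho.trans_le (weight_le_totalWeight ctx hpnn estar h o)).ne')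
    fun _ hv => mixture_pos ctx hpnn ho hv

variable [Fintype O] [Nonempty O] (hpnn : ∀ e c o, 0 ≤ p e c o)
  (hpsum : ∀ e c, ∑ v, p e c v = 1) (hctx : ∀ h : Fin H, DependsOnFirst h fun o => ctx o h)
include hpnn hpsum hctx

lemma sum_weight_mul_sum_klDiv_le_log_card (estar : E) :
    ∑ o, weight p ctx estar H o * ∑ h, klDiv (p estar (ctx o h)) (mixture p ctx h o)
      ≤ Real.log (Fintype.card E) := by
  have hψ (h : Fin H) : DependsOnFirst h fun o v =>
      Real.log (p estar (ctx o h) v / mixture p ctx h o v) := fun o o' hoo => by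
    dsimp only
    rw [show ctx o h = ctx o' h from hctx h o o' hoo, dependsOnFirst_mixture ctx hctx h o o' hoo]
  calc ∑ o, weight p ctx estar H o * ∑ h, klDiv (p estar (ctx o h)) (mixture p ctx h o)
      = ∑ h, ∑ o, weight p ctx estar H o * ∑ v, p estar (ctx o h) v
          * Real.log (p estar (ctx o h) v / mixture p ctx h o v) := by
        simp only [klDiv, mul_sum (s := (univ : Finset (Fin H)))]
        exact sum_comm
    _ = ∑ h, ∑ o, weight p ctx estar H o
          * Real.log (p estar (ctx o h) (o h) / mixture p ctx h o (o h)) :=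
        sum_congr rfl fun h _ =>
          sum_prefixProb_mul_sum_kernel _ (dependsOnFirst_expert ctx hctx estar)
            (fun _ _ => hpsum _ _) h (hψ h)
    _ ≤ ∑ o, weight p ctx estar H o * Real.log (Fintype.card E) := by
        rw [sum_comm]
        refine sum_le_sum fun o _ => ?_
        rw [← mul_sum]
        rcases (weight_nonneg ctx hpnn estar H o).eq_or_lt with h0 | hpos
        · simp [← h0]
        · exact mul_le_mul_of_nonneg_left (sum_log_div_mixture_le_log_card ctx hpnn hpos) hpos.le
    _ = Real.log (Fintype.card E) := by
        rw [← sum_mul, sum_weight_eq_one ctx hpsum hctx, one_mul]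

theorem sum_weight_mul_sum_tvDist_le (estar : E) :
    ∑ o, weight p ctx estar H o * ∑ h, tvDist (mixture p ctx h o) (p estar (ctx o h))
      ≤ √(H * Real.log (Fintype.card E)) := by
  refine (le_abs_self _).trans (Real.abs_le_sqrt ?_)
  calc (∑ o, weight p ctx estar H o * ∑ h, tvDist (mixture p ctx h o) (p estar (ctx o h))) ^ 2
      ≤ Fintype.card (Fin H) * ∑ o, weight p ctx estar H o
          * ∑ h, tvDist (mixture p ctx h o) (p estar (ctx o h)) ^ 2 :=
        sq_sum_mul_sum_le_card_mul (weight_nonneg ctx hpnn estar H)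
          (sum_weight_eq_one ctx hpsum hctx estar) _
    _ ≤ H * ∑ o, weight p ctx estar H o * ∑ h, klDiv (p estar (ctx o h)) (mixture p ctx h o) := by
        rw [Fintype.card_fin]
        gcongr 1
        refine sum_le_sum fun o _ => ?_
        rcases (weight_nonneg ctx hpnn estar H o).eq_or_lt with h0 | hpos
        · simp [← h0]
        · gcongr with h
          exact tvDist_mixture_sq_le_klDiv ctx hpnn hpsum (weight_pos ctx hpnn hpos h)
    _ ≤ H * Real.log (Fintype.card E) := by
        gcongr
        exact sum_weight_mul_sum_klDiv_le_log_card ctx hpnn hpsum hctx estar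

end Aggregation

end VovkAggregation

open VovkAggregation in
theorem vovk_aggregation_guarantee_general
    (H : ℕ)
    (C O E : Type) [Fintype O] [Fintype E] [Nonempty O]
    (p : E → C → O → ℝ)
    (hpnn : ∀ e c o, 0 ≤ p e c o) (hpsum : ∀ e c, ∑ o, p e c o = 1)
    (estar : E)
    -- nature's (adaptive) choice of contexts: the context at round h depends only
    -- on the outcomes of the earlier rounds
    (ctx : (Fin H → O) → Fin H → C)
    (hctx : ∀ o o' h, (∀ j : Fin H, j < h → o j = o' j) → ctx o h = ctx o' h) :
    (1 / H : ℝ) *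
      ∑ o : Fin H → O,
        (∏ h, p estar (ctx o h) (o h)) *
          ∑ h, (1 / 2 : ℝ) * ∑ oo : O,
            |(∑ e, (∏ j ∈ univ.filter (fun j => j < h), p e (ctx o j) (o j)) * p e (ctx o h) oo)
                / (∑ e, ∏ j ∈ univ.filter (fun j => j < h), p e (ctx o j) (o j))
              - p estar (ctx o h) oo|
      ≤ Real.sqrt (Real.log (Fintype.card E) / H) := by
  have hctx' : ∀ h : Fin H, DependsOnFirst h fun o => ctx o h := fun h o o' hoo => hctx o o' h hoo
  calc _ = (1 / H : ℝ) * ∑ o, weight p ctx estar H o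
        * ∑ h, tvDist (mixture p ctx h o) (p estar (ctx o h)) := by
        simp only [weight, prefixProb_self]
        rfl
    _ ≤ (1 / H : ℝ) * √(H * Real.log (Fintype.card E)) := by
        gcongr
        exact sum_weight_mul_sum_tvDist_le ctx hpnn hpsum hctx' estar
    _ = √(Real.log (Fintype.card E) / H) := by
        rw [Real.sqrt_mul H.cast_nonneg, Real.sqrt_div' _ H.cast_nonneg, ← mul_assoc,
          one_div_mul_eq_div, Real.sqrt_div_self', one_div_mul_eq_div]

/-- Vovk's aggregating algorithm guarantee: under realizability by an expert `estar`
(outcomes at each round h are drawn from `p estar (ctx o h)` given the past, so that the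
probability of a full outcome sequence o is ∏_h p estar (ctx o h) (o h)), the exponential
weights predictions q̂_h satisfy (1/H) Σ_h E[D_TV(q̂_h, p^{e*}(c_h))] ≤ √(log|E|/H). -/
theorem vovk_aggregation_guarantee
    (H : ℕ) (hH : 0 < H)
    (C O E : Type) [Fintype C] [Fintype O] [Fintype E] [Nonempty O] [Nonempty E]
    (p : E → C → O → ℝ)
    (hpnn : ∀ e c o, 0 ≤ p e c o) (hpsum : ∀ e c, ∑ o, p e c o = 1)
    (estar : E)
    -- nature's (adaptive) choice of contexts: the context at round h depends only
    -- on the outcomes of the earlier rounds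
    (ctx : (Fin H → O) → Fin H → C)
    (hctx : ∀ o o' h, (∀ j : Fin H, j < h → o j = o' j) → ctx o h = ctx o' h) :
    (1 / H : ℝ) *
      ∑ o : Fin H → O,
        (∏ h, p estar (ctx o h) (o h)) *
          ∑ h, (1 / 2 : ℝ) * ∑ oo : O,
            |(∑ e, (∏ j ∈ univ.filter (fun j => j < h), p e (ctx o j) (o j)) * p e (ctx o h) oo)
                / (∑ e, ∏ j ∈ univ.filter (fun j => j < h), p e (ctx o j) (o j))
              - p estar (ctx o h) oo|
      ≤ Real.sqrt (Real.log (Fintype.card E) / H) :=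
  vovk_aggregation_guarantee_general H C O E p hpnn hpsum estar ctx hctx
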